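/- arXiv:2011.14234 — 3 statements merged into one kernel-verified Lean document; each statement's English description precedes it below -/
import Mathlib

section
/- Let A be a real super division algebra with even part ℂ and nonzero odd element e such that e a e⁻¹ = conj(a) for all a ∈ A₀ ≅ ℂ. Then e² is real (i.e., e² lies in ℝ·1 ⊆ A₀), and e can be rescaled by a real number so that e² = 1 or e² = -1. -/
/-!
Since `e` commutes with `e²` and `e²` is even, the conjugation hypothesis applied to `a = b = e²`
gives `conj (φ e²) = φ e²`, so `e²` corresponds to a real number `r`. As `e` has a right inverse,
`e² ≠ 0`, hence `r ≠ 0`, and `e / √|r|` squares to `sign r = ±1`.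
-/

theorem mul_self_ne_zero_of_mul_eq_one {R : Type*} [MonoidWithZero R] {e e' : R} (he0 : e ≠ 0)
    (hee' : e * e' = 1) : e * e ≠ 0 := by
  intro h
  apply he0
  calc e = e * e * e' := by rw [mul_assoc, hee', mul_one]
    _ = 0 := by rw [h, zero_mul]

theorem mul_mul_self_mul_eq_mul_self {R : Type*} [Monoid R] {e e' : R} (hee' : e * e' = 1) :
    e * (e * e) * e' = e * e := by
  rw [← mul_assoc, mul_assoc, hee', mul_one]

theorem AlgEquiv.eq_algebraMap_re_of_conj_eq {B : Type*} [Ring B] [Algebra ℝ B] (φ : B ≃ₐ[ℝ] ℂ)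
    {s : B} (hs : starRingEnd ℂ (φ s) = φ s) : s = algebraMap ℝ B (φ s).re := by
  apply φ.injective
  rw [AlgEquiv.commutes, Complex.coe_algebraMap, Complex.conj_eq_iff_re.mp hs]

theorem exists_smul_mul_self_eq_one_or_eq_neg_one {A : Type*} [Ring A] [Algebra ℝ A] {x : A}
    {r : ℝ} (hx : x * x = algebraMap ℝ A r) (hr : r ≠ 0) :
    ∃ t : ℝ, (t • x) * (t • x) = 1 ∨ (t • x) * (t • x) = -1 := by
  set t := (Real.sqrt |r|)⁻¹
  have hsq : (t • x) * (t • x) = algebraMap ℝ A (|r|⁻¹ * r) := by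
    rw [smul_mul_smul_comm, hx, Algebra.smul_def, ← map_mul, ← pow_two, inv_pow,
      Real.sq_sqrt (abs_nonneg r)]
  refine ⟨t, ?_⟩
  rcases hr.lt_or_gt with hneg | hpos
  · right
    rw [hsq, abs_of_neg hneg, inv_neg, neg_mul, inv_mul_cancel₀ hr, map_neg, map_one]
  · left
    rw [hsq, abs_of_pos hpos, inv_mul_cancel₀ hr, map_one]

theorem stmt_10_general {A : Type*} [Ring A] [Algebra ℝ A]
    (A₀ : Subalgebra ℝ A) (A₁ : Submodule ℝ A)
    (h11 : ∀ a ∈ A₁, ∀ b ∈ A₁, a * b ∈ A₀)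
    (φ : A₀ ≃ₐ[ℝ] ℂ)
    (e : A) (he : e ∈ A₁) (he0 : e ≠ 0)
    (e' : A) (hee' : e * e' = 1)
    (hconj : ∀ a b : A₀, (b : A) = e * (a : A) * e' → φ b = (starRingEnd ℂ) (φ a)) :
    (∃ r : ℝ, e * e = algebraMap ℝ A r) ∧
      (∃ t : ℝ, (t • e) * (t • e) = 1 ∨ (t • e) * (t • e) = -1) := by
  set s : A₀ := ⟨e * e, h11 e he e he⟩
  have hs_real : starRingEnd ℂ (φ s) = φ s :=
    (hconj s s (mul_mul_self_mul_eq_mul_self hee').symm).symm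
  have hee : e * e = algebraMap ℝ A (φ s).re :=
    congrArg Subtype.val (φ.eq_algebraMap_re_of_conj_eq hs_real)
  have hr : (φ s).re ≠ 0 := by
    intro hr
    exact mul_self_ne_zero_of_mul_eq_one he0 hee' (by rw [hee, hr, map_zero])
  exact ⟨⟨_, hee⟩, exists_smul_mul_self_eq_one_or_eq_neg_one hee hr⟩

/-- If A₀ ≅ ℂ and conjugation by the nonzero odd element e acts on A₀ as
complex conjugation, then e² is real, and a real rescaling of e squares to 1 or -1. -/
theorem stmt_10 {A : Type*} [Ring A] [Algebra ℝ A] [FiniteDimensional ℝ A]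
    (A₀ : Subalgebra ℝ A) (A₁ : Submodule ℝ A)
    (hcompl : IsCompl (Subalgebra.toSubmodule A₀) A₁)
    (h01 : ∀ a ∈ A₀, ∀ b ∈ A₁, a * b ∈ A₁)
    (h10 : ∀ a ∈ A₁, ∀ b ∈ A₀, a * b ∈ A₁)
    (h11 : ∀ a ∈ A₁, ∀ b ∈ A₁, a * b ∈ A₀)
    (hdiv : ∀ a : A, (a ∈ A₀ ∨ a ∈ A₁) → a ≠ 0 → IsUnit a)
    (φ : A₀ ≃ₐ[ℝ] ℂ)
    (e : A) (he : e ∈ A₁) (he0 : e ≠ 0)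
    (e' : A) (hee' : e * e' = 1) (he'e : e' * e = 1)
    (hconj : ∀ a b : A₀, (b : A) = e * (a : A) * e' → φ b = (starRingEnd ℂ) (φ a)) :
    (∃ r : ℝ, e * e = algebraMap ℝ A r) ∧
      (∃ t : ℝ, (t • e) * (t • e) = 1 ∨ (t • e) * (t • e) = -1) :=
  stmt_10_general A₀ A₁ h11 φ e he he0 e' hee' hconj
end

section
/- Let A be a real super division algebra with even part ℍ and e a nonzero odd element. Then there exists a nonzero odd element e' ∈ A₁ that commutes with every element of A₀. -/
/-!
Since `e⁻¹ = (e * e)⁻¹ * e` is odd, conjugation by `e` restricts to an `ℝ`-algebra endomorphism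
of `A₀ ≅ ℍ`. By Skolem–Noether for `ℍ` it is conjugation by some `q ∈ A₀`, and then `q⁻¹ * e`
commutes with `A₀`. As for Skolem–Noether: an algebra map out of `ℍ` is determined by
the images of `i` and `j`, and when `u * u = i * i = -1` every `y - u * y * i` solves
`u * q = q * i`; an element anticommuting with `i` guarantees that one of these is nonzero.
-/

open Quaternion

section QuaternionPairs

variable {R : Type*} [Ring R]

theorem mul_sub_mul_mul_eq_sub_mul_mul_mul {a b : R} (ha : a * a = -1) (hb : b * b = -1)
    (y : R) : a * (y - a * y * b) = (y - a * y * b) * b := by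
  have hay : a * (a * y * b) = -(y * b) := by rw [← mul_assoc, ← mul_assoc, ha]; noncomm_ring
  have hyb : a * y * b * b = -(a * y) := by rw [mul_assoc _ b, hb]; noncomm_ring
  rw [mul_sub, sub_mul, hay, hyb]
  abel

theorem exists_sub_mul_mul_ne_zero [NoZeroDivisors R] [CharZero R] {a b c x : R}
    (hb : b * b = -1) (hcb : c * b = -(b * c)) (hxc : x * c ≠ 0) :
    ∃ y, (y = x ∨ y = x * c) ∧ y - a * y * b ≠ 0 := by
  by_contra! h
  have hx : a * x * b = x := (sub_eq_zero.mp (h x (.inl rfl))).symm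
  have hax : a * x = -(x * b) := by
    calc a * x = -(a * x * b * b) := by rw [mul_assoc _ b, hb]; noncomm_ring
      _ = -(x * b) := by rw [hx]
  have hbcb : b * c * b = c := by rw [mul_assoc, hcb, mul_neg, ← mul_assoc, hb]; noncomm_ring
  have hxc' : a * (x * c) * b = -(x * c) := by
    rw [← mul_assoc, hax, neg_mul, neg_mul, mul_assoc x b, mul_assoc x, hbcb]
  have h2 : 2 * (x * c) = 0 := by
    have := h (x * c) (.inr rfl)
    rw [hxc', sub_neg_eq_add] at this
    rw [two_mul, this]
  exact hxc ((mul_eq_zero.mp h2).resolve_left two_ne_zero)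

theorem exists_ne_zero_mul_eq_mul_of_quaternion_relations [NoZeroDivisors R] [CharZero R]
    {i j u v : R} (hi : i * i = -1) (hj : j * j = -1) (hji : j * i = -(i * j))
    (hu : u * u = -1) (hv : v * v = -1) (hvu : v * u = -(u * v)) :
    ∃ q ≠ 0, u * q = q * i ∧ v * q = q * j := by
  have hi0 : i ≠ 0 := by rintro rfl; simp at hi
  have hj0 : j ≠ 0 := by rintro rfl; simp at hj
  obtain ⟨y₁, -, hy₁⟩ := exists_sub_mul_mul_ne_zero (a := u) hi hji (x := 1) (by simpa)
  set q₁ := y₁ - u * y₁ * i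
  have hq₁ : u * q₁ = q₁ * i := mul_sub_mul_mul_eq_sub_mul_mul_mul hu hi y₁
  have hij : i * j = -(j * i) := by rw [hji, neg_neg]
  obtain ⟨y, hy, hy0⟩ := exists_sub_mul_mul_ne_zero (a := v) hj hij (mul_ne_zero hy₁ hi0)
  have huy : u * y = y * i := by
    rcases hy with rfl | rfl
    · exact hq₁
    · rw [← mul_assoc, hq₁]
  refine ⟨y - v * y * j, hy0, ?_, mul_sub_mul_mul_eq_sub_mul_mul_mul hv hj y⟩
  have huvyj : u * (v * y * j) = v * y * j * i := by
    calc u * (v * y * j) = -(v * (u * y) * j) := by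
          rw [← mul_assoc, ← mul_assoc, ← mul_assoc, ← neg_neg (u * v), ← hvu]; noncomm_ring
      _ = v * y * (-(i * j)) := by rw [huy]; noncomm_ring
      _ = v * y * j * i := by rw [← hji]; simp only [mul_assoc]
  rw [mul_sub, sub_mul, huvyj, huy]

end QuaternionPairs

theorem Quaternion.exists_unit_intertwining {D : Type*} [DivisionRing D] [Algebra ℝ D]
    (f g : ℍ[ℝ] →ₐ[ℝ] D) : ∃ q : Dˣ, ∀ x, f x * q = q * g x := by
  have : CharZero D := charZero_of_injective_algebraMap (algebraMap ℝ D).injective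
  let B : QuaternionAlgebra.Basis ℍ[ℝ] (-1 : ℝ) 0 (-1) := .self ℝ
  have hi : B.i * B.i = -1 := by simp [B.i_mul_i]
  have hj : B.j * B.j = -1 := by simp [B.j_mul_j]
  have hji : B.j * B.i = -(B.i * B.j) := by simp [B.j_mul_i, B.i_mul_j]
  have rels (h : ℍ[ℝ] →ₐ[ℝ] D) : h B.i * h B.i = -1 ∧ h B.j * h B.j = -1 ∧
      h B.j * h B.i = -(h B.i * h B.j) := by
    simp only [← map_mul, hi, hj, hji, map_neg, map_one, and_self]
  obtain ⟨q, hq0, hqi, hqj⟩ := exists_ne_zero_mul_eq_mul_of_quaternion_relations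
    (rels g).1 (rels g).2.1 (rels g).2.2 (rels f).1 (rels f).2.1 (rels f).2.2
  let conj := MulSemiringAction.toAlgHom ℝ D (ConjAct.toConjAct (Units.mk0 q hq0))
  have conj_apply (y : D) : conj y = q * y * q⁻¹ := by simp [conj, ConjAct.units_smul_def]
  have intertwined {x : ℍ[ℝ]} (hx : f x * q = q * g x) : f x = conj.comp g x := by
    rw [AlgHom.comp_apply, conj_apply, eq_mul_inv_iff_mul_eq₀ hq0, hx]
  have hf : f = conj.comp g := Quaternion.hom_ext (intertwined hqi) (intertwined hqj)
  refine ⟨Units.mk0 q hq0, fun x => ?_⟩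
  rw [hf, AlgHom.comp_apply, conj_apply, Units.val_mk0, inv_mul_cancel_right₀ hq0]

theorem Units.commute_inv_mul_of_conj_mul_eq {M : Type*} [Monoid M] {u q : Mˣ} {x : M}
    (h : (u : M) * x * ↑u⁻¹ * q = q * x) : Commute ((↑q⁻¹ : M) * u) x := by
  have hconj : (u : M) * x * ↑u⁻¹ = q * x * ↑q⁻¹ := (Units.eq_mul_inv_iff_mul_eq q).mpr h
  calc (↑q⁻¹ : M) * u * x = ↑q⁻¹ * (u * x * ↑u⁻¹) * u := by simp [mul_assoc]
    _ = x * (↑q⁻¹ * ↑u) := by rw [hconj]; simp [mul_assoc]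

theorem Subalgebra.inv_mem_of_algEquiv {R A D : Type*} [CommSemiring R] [Ring A] [Algebra R A]
    [DivisionRing D] [Algebra R D] {S : Subalgebra R A} (φ : S ≃ₐ[R] D) {u : Aˣ}
    (hu : (u : A) ∈ S) : ((u⁻¹ : Aˣ) : A) ∈ S := by
  have : Nontrivial S := φ.toEquiv.nontrivial
  have : Nontrivial A := (Subtype.val_injective (p := (· ∈ S))).nontrivial
  set x : S := ⟨u, hu⟩
  have hx : φ x ≠ 0 := (map_ne_zero_iff φ φ.injective).mpr fun h => u.ne_zero congr($h.1)
  have hxy : x * φ.symm (φ x)⁻¹ = 1 := φ.injective (by simp [hx])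
  rw [Units.inv_eq_of_mul_eq_one_right congr($hxy.1)]
  exact SetLike.coe_mem _

theorem AlgHom.exists_unit_intertwining_of_algEquiv_quaternion {B : Type*} [Ring B] [Algebra ℝ B]
    (φ : B ≃ₐ[ℝ] ℍ[ℝ]) (σ : B →ₐ[ℝ] B) : ∃ w : Bˣ, ∀ x, σ x * w = w * x := by
  obtain ⟨q, hq⟩ := Quaternion.exists_unit_intertwining
    ((φ : B →ₐ[ℝ] ℍ[ℝ]).comp (σ.comp φ.symm)) (AlgHom.id ℝ _)
  exact ⟨Units.map φ.symm q, fun x => φ.injective (by simpa using hq (φ x))⟩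

theorem stmt_12_general {A : Type*} [Ring A] [Algebra ℝ A]
    (A₀ : Subalgebra ℝ A) (A₁ : Submodule ℝ A)
    (h01 : ∀ a ∈ A₀, ∀ b ∈ A₁, a * b ∈ A₁)
    (h10 : ∀ a ∈ A₁, ∀ b ∈ A₀, a * b ∈ A₁)
    (h11 : ∀ a ∈ A₁, ∀ b ∈ A₁, a * b ∈ A₀)
    (hdiv : ∀ a : A, (a ∈ A₀ ∨ a ∈ A₁) → a ≠ 0 → IsUnit a)
    (φ : A₀ ≃ₐ[ℝ] Quaternion ℝ)
    (e : A) (he : e ∈ A₁) (he0 : e ≠ 0) :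
    ∃ e' ∈ A₁, e' ≠ 0 ∧ ∀ a ∈ A₀, e' * a = a * e' := by
  have : Nontrivial A := nontrivial_of_ne e 0 he0
  obtain ⟨u, rfl⟩ := hdiv e (.inr he) he0
  have hu_inv : ((u⁻¹ : Aˣ) : A) ∈ A₁ := by
    rw [show u⁻¹ = (u * u)⁻¹ * u by group, Units.val_mul]
    exact h01 _ (Subalgebra.inv_mem_of_algEquiv φ (h11 _ he _ he)) _ he
  let c : A₀ →ₐ[ℝ] A₀ :=
    ((MulSemiringAction.toAlgHom ℝ A (ConjAct.toConjAct u)).comp A₀.val).codRestrict A₀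
      fun a => by simpa [ConjAct.units_smul_def] using h11 _ (h10 _ he _ a.2) _ hu_inv
  obtain ⟨w, hw⟩ := AlgHom.exists_unit_intertwining_of_algEquiv_quaternion φ c
  let q : Aˣ := Units.map (A₀.val : A₀ →* A) w
  refine ⟨↑q⁻¹ * u, h01 _ (w⁻¹ : A₀ˣ).val.2 _ he, (q⁻¹ * u).ne_zero, fun a ha => ?_⟩
  exact Units.commute_inv_mul_of_conj_mul_eq <| by
    simpa [c, q, ConjAct.units_smul_def] using congr($(hw ⟨a, ha⟩).1)

/-- If A₀ ≅ ℍ and A has a nonzero odd element, then A has a nonzero odd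
element commuting with every even element. -/
theorem stmt_12 {A : Type*} [Ring A] [Algebra ℝ A] [FiniteDimensional ℝ A]
    (A₀ : Subalgebra ℝ A) (A₁ : Submodule ℝ A)
    (hcompl : IsCompl (Subalgebra.toSubmodule A₀) A₁)
    (h01 : ∀ a ∈ A₀, ∀ b ∈ A₁, a * b ∈ A₁)
    (h10 : ∀ a ∈ A₁, ∀ b ∈ A₀, a * b ∈ A₁)
    (h11 : ∀ a ∈ A₁, ∀ b ∈ A₁, a * b ∈ A₀)
    (hdiv : ∀ a : A, (a ∈ A₀ ∨ a ∈ A₁) → a ≠ 0 → IsUnit a)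
    (φ : A₀ ≃ₐ[ℝ] Quaternion ℝ)
    (e : A) (he : e ∈ A₁) (he0 : e ≠ 0) :
    ∃ e' ∈ A₁, e' ≠ 0 ∧ ∀ a ∈ A₀, e' * a = a * e' :=
  stmt_12_general A₀ A₁ h01 h10 h11 hdiv φ e he he0
end

section
/- Up to isomorphism of superalgebras, there are exactly two real super division algebras A with A₀ = A₁ = ℝ: one generated by an odd element e with e² = 1 (isomorphic to ℝ[x]/(x²-1) with its natural grading), and one with e² = -1 (isomorphic to ℂ graded with 1 even and i odd); and these two are not isomorphic. -/
open Polynomial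

lemma aux_q_ne : (X ^ 2 - 1 : ℝ[X]) ≠ 0 := by
  intro h
  have := congrArg (Polynomial.eval 0) h
  simp at this

lemma aux_q_natDegree : (X ^ 2 - 1 : ℝ[X]).natDegree = 2 := by
  compute_degree!

lemma aux_finrank_adjoin : Module.finrank ℝ (AdjoinRoot (X ^ 2 - 1 : ℝ[X])) = 2 := by
  rw [(AdjoinRoot.powerBasis aux_q_ne).finrank]
  exact aux_q_natDegree

instance : FiniteDimensional ℝ (AdjoinRoot (X ^ 2 - 1 : ℝ[X])) :=
  FiniteDimensional.of_finrank_pos (by rw [aux_finrank_adjoin]; norm_num)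

lemma aux_nontrivial : Nontrivial (AdjoinRoot (X ^ 2 - 1 : ℝ[X])) :=
  Module.nontrivial_of_finrank_pos (R := ℝ) (by rw [aux_finrank_adjoin]; norm_num)

lemma aux_root_sq : (AdjoinRoot.root (X ^ 2 - 1 : ℝ[X])) ^ 2 = 1 := by
  have h := AdjoinRoot.mk_self (f := (X ^ 2 - 1 : ℝ[X]))
  rwa [map_sub, map_pow, AdjoinRoot.mk_X, map_one, sub_eq_zero] at h

lemma aux_root_mul :
    AdjoinRoot.root (X ^ 2 - 1 : ℝ[X]) * AdjoinRoot.root (X ^ 2 - 1 : ℝ[X]) = 1 := by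
  rw [← sq]; exact aux_root_sq

/-- Lift `aeval e` to a hom from `AdjoinRoot (X^2-1)` into a possibly noncommutative
algebra `A`, given `e * e = 1`. -/
noncomputable def auxLift {A : Type*} [Ring A] [Algebra ℝ A] (e : A) (he : e * e = 1) :
    AdjoinRoot (X ^ 2 - 1 : ℝ[X]) →ₐ[ℝ] A :=
  Ideal.Quotient.liftₐ (Ideal.span {(X ^ 2 - 1 : ℝ[X])}) (Polynomial.aeval e) (by
    intro p hp
    obtain ⟨r, rfl⟩ := Ideal.mem_span_singleton'.mp hp
    rw [map_mul]
    have : Polynomial.aeval e (X ^ 2 - 1 : ℝ[X]) = 0 := by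
      rw [map_sub, map_pow, aeval_X, map_one, sq, he, sub_self]
    rw [this, mul_zero])

lemma auxLift_root {A : Type*} [Ring A] [Algebra ℝ A] (e : A) (he : e * e = 1) :
    auxLift e he (AdjoinRoot.root _) = e := by
  show Polynomial.aeval e X = e
  exact aeval_X e

/-- Up to superalgebra isomorphism there are exactly two real super division
algebras with A₀ = A₁ = ℝ: every such algebra is graded-isomorphic to ℝ[x]/(x²-1)
(with x odd) or to ℂ (with i odd), and these two are not graded-isomorphic. -/
theorem stmt_14 {A : Type*} [Ring A] [Algebra ℝ A] [FiniteDimensional ℝ A]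
    (A₀ : Subalgebra ℝ A) (A₁ : Submodule ℝ A)
    (hcompl : IsCompl (Subalgebra.toSubmodule A₀) A₁)
    (h01 : ∀ a ∈ A₀, ∀ b ∈ A₁, a * b ∈ A₁)
    (h10 : ∀ a ∈ A₁, ∀ b ∈ A₀, a * b ∈ A₁)
    (h11 : ∀ a ∈ A₁, ∀ b ∈ A₁, a * b ∈ A₀)
    (hdiv : ∀ a : A, (a ∈ A₀ ∨ a ∈ A₁) → a ≠ 0 → IsUnit a)
    (hA₀ : Subalgebra.toSubmodule A₀ = Submodule.span ℝ {(1 : A)})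
    (hA₁ : Module.finrank ℝ A₁ = 1) :
    ((∃ f : A ≃ₐ[ℝ] ℂ,
        Submodule.map (f.toLinearMap : A →ₗ[ℝ] ℂ) (Subalgebra.toSubmodule A₀) =
          Submodule.span ℝ {(1 : ℂ)} ∧
        Submodule.map (f.toLinearMap : A →ₗ[ℝ] ℂ) A₁ = Submodule.span ℝ {Complex.I}) ∨
     (∃ f : A ≃ₐ[ℝ] AdjoinRoot (X ^ 2 - 1 : ℝ[X]),
        Submodule.map (f.toLinearMap : A →ₗ[ℝ] _) (Subalgebra.toSubmodule A₀) =
          Submodule.span ℝ {(1 : AdjoinRoot (X ^ 2 - 1 : ℝ[X]))} ∧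
        Submodule.map (f.toLinearMap : A →ₗ[ℝ] _) A₁ =
          Submodule.span ℝ {AdjoinRoot.root (X ^ 2 - 1 : ℝ[X])})) ∧
    ¬∃ g : ℂ ≃ₐ[ℝ] AdjoinRoot (X ^ 2 - 1 : ℝ[X]),
        Submodule.map (g.toLinearMap : ℂ →ₗ[ℝ] _) (Submodule.span ℝ {(1 : ℂ)}) =
          Submodule.span ℝ {(1 : AdjoinRoot (X ^ 2 - 1 : ℝ[X]))} ∧
        Submodule.map (g.toLinearMap : ℂ →ₗ[ℝ] _) (Submodule.span ℝ {Complex.I}) =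
          Submodule.span ℝ {AdjoinRoot.root (X ^ 2 - 1 : ℝ[X])} := by
  constructor
  · -- find a nonzero odd element
    have hnt₁ : Nontrivial A₁ :=
      Module.nontrivial_of_finrank_pos (R := ℝ) (by rw [hA₁]; norm_num)
    obtain ⟨e₀s, he₀s⟩ := exists_ne (0 : A₁)
    set e₀ : A := (e₀s : A) with he₀def
    have he₀mem : e₀ ∈ A₁ := e₀s.2
    have he₀ne : e₀ ≠ 0 := fun h => he₀s (Subtype.ext h)
    have hntA : Nontrivial A := nontrivial_of_ne e₀ 0 he₀ne
    have hsq : e₀ * e₀ ∈ Submodule.span ℝ {(1 : A)} := by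
      rw [← hA₀]; exact h11 e₀ he₀mem e₀ he₀mem
    obtain ⟨c, hc⟩ := Submodule.mem_span_singleton.mp hsq
    have hcne : c ≠ 0 := by
      rintro rfl
      have hu : IsUnit (e₀ * e₀) :=
        (hdiv e₀ (Or.inr he₀mem) he₀ne).mul (hdiv e₀ (Or.inr he₀mem) he₀ne)
      rw [← hc] at hu
      simp at hu
    set s : ℝ := Real.sqrt |c| with hs
    have hspos : 0 < s := Real.sqrt_pos.mpr (abs_pos.mpr hcne)
    set e : A := s⁻¹ • e₀ with he
    have hemem : e ∈ A₁ := Submodule.smul_mem _ _ he₀mem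
    have hene : e ≠ 0 := smul_ne_zero (inv_ne_zero hspos.ne') he₀ne
    have hee : e * e = (|c|⁻¹ * c) • 1 := by
      rw [he, smul_mul_smul_comm, ← hc, smul_smul]
      congr 1
      rw [← mul_inv, Real.mul_self_sqrt (abs_nonneg c)]
    have hA₁span : Submodule.span ℝ {e} = A₁ := by
      apply Submodule.eq_of_le_of_finrank_eq
      · rwa [Submodule.span_singleton_le_iff_mem]
      · rw [finrank_span_singleton hene, hA₁]
    have hfrA : Module.finrank ℝ A = 2 := by
      have h := Submodule.finrank_add_eq_of_isCompl hcompl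
      rw [hA₀, finrank_span_singleton (one_ne_zero : (1:A) ≠ 0), hA₁] at h
      omega
    have htop : Submodule.span ℝ {(1:A)} ⊔ Submodule.span ℝ {e} = ⊤ := by
      rw [hA₁span, ← hA₀]; exact hcompl.codisjoint.eq_top
    rcases lt_or_gt_of_ne hcne with hneg | hpos
    · -- e * e = -1 : complex case
      left
      have hee' : e * e = -1 := by
        rw [hee, abs_of_neg hneg]
        have h1 : ((-c)⁻¹ * c : ℝ) = -1 := by field_simp
        rw [h1, neg_smul, one_smul]
      set φ : ℂ →ₐ[ℝ] A := Complex.liftAux e hee' with hφ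
      have hφI : φ Complex.I = e := Complex.liftAux_apply_I e hee'
      have hsurj : Function.Surjective φ := by
        rw [← AlgHom.range_eq_top]
        apply Subalgebra.toSubmodule.injective
        rw [Algebra.top_toSubmodule, ← top_le_iff, ← htop]
        apply sup_le <;> rw [Submodule.span_singleton_le_iff_mem]
        · exact ⟨1, map_one φ⟩
        · exact ⟨Complex.I, hφI⟩
      have hinj : Function.Injective φ :=
        (LinearMap.injective_iff_surjective_of_finrank_eq_finrank
          (f := φ.toLinearMap) (by rw [Complex.finrank_real_complex, hfrA])).mpr hsurj
      set ψ : ℂ ≃ₐ[ℝ] A := AlgEquiv.ofBijective φ ⟨hinj, hsurj⟩ with hψ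
      have hψI : ψ Complex.I = e := hφI
      refine ⟨ψ.symm, ?_, ?_⟩
      · rw [hA₀, Submodule.map_span, Set.image_singleton]
        have h1 : (ψ.symm.toLinearMap : A →ₗ[ℝ] ℂ) 1 = 1 := by
          rw [AlgEquiv.toLinearMap_apply, map_one]
        rw [h1]
      · rw [← hA₁span, Submodule.map_span, Set.image_singleton]
        have h1 : (ψ.symm.toLinearMap : A →ₗ[ℝ] ℂ) e = Complex.I := by
          rw [AlgEquiv.toLinearMap_apply, ← hψI, AlgEquiv.symm_apply_apply]
        rw [h1]
    · -- e * e = 1 : AdjoinRoot case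
      right
      have hee' : e * e = 1 := by
        rw [hee, abs_of_pos hpos]
        have h1 : (c⁻¹ * c : ℝ) = 1 := by field_simp
        rw [h1, one_smul]
      set φ := auxLift e hee' with hφ
      have hφr : φ (AdjoinRoot.root _) = e := auxLift_root e hee'
      have hsurj : Function.Surjective φ := by
        rw [← AlgHom.range_eq_top]
        apply Subalgebra.toSubmodule.injective
        rw [Algebra.top_toSubmodule, ← top_le_iff, ← htop]
        apply sup_le <;> rw [Submodule.span_singleton_le_iff_mem]
        · exact ⟨1, map_one φ⟩
        · exact ⟨AdjoinRoot.root _, hφr⟩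
      have hinj : Function.Injective φ :=
        (LinearMap.injective_iff_surjective_of_finrank_eq_finrank
          (f := φ.toLinearMap) (by rw [aux_finrank_adjoin, hfrA])).mpr hsurj
      set ψ := AlgEquiv.ofBijective φ ⟨hinj, hsurj⟩ with hψ
      have hψr : ψ (AdjoinRoot.root _) = e := hφr
      refine ⟨ψ.symm, ?_, ?_⟩
      · rw [hA₀, Submodule.map_span, Set.image_singleton]
        have h1 : (ψ.symm.toLinearMap : A →ₗ[ℝ] _) 1 = 1 := by
          rw [AlgEquiv.toLinearMap_apply, map_one]
        rw [h1]
      · rw [← hA₁span, Submodule.map_span, Set.image_singleton]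
        have h1 : (ψ.symm.toLinearMap : A →ₗ[ℝ] _) e = AdjoinRoot.root _ := by
          rw [AlgEquiv.toLinearMap_apply, ← hψr, AlgEquiv.symm_apply_apply]
        rw [h1]
  · rintro ⟨g, -, hI⟩
    haveI := aux_nontrivial
    have hmem : g Complex.I ∈ Submodule.span ℝ {AdjoinRoot.root (X ^ 2 - 1 : ℝ[X])} := by
      rw [← hI]
      exact ⟨Complex.I, Submodule.mem_span_singleton_self _, rfl⟩
    obtain ⟨t, ht⟩ := Submodule.mem_span_singleton.mp hmem
    have hgI : g Complex.I * g Complex.I = -1 := by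
      rw [← map_mul, Complex.I_mul_I, map_neg, map_one]
    rw [← ht, smul_mul_smul_comm, aux_root_mul] at hgI
    have htt : algebraMap ℝ (AdjoinRoot (X ^ 2 - 1 : ℝ[X])) (t * t) = -1 := by
      rw [Algebra.algebraMap_eq_smul_one, hgI]
    have h3 : algebraMap ℝ (AdjoinRoot (X ^ 2 - 1 : ℝ[X])) (-1) = -1 := by
      rw [map_neg, map_one]
    have h2 : (t * t : ℝ) = -1 :=
      (algebraMap ℝ (AdjoinRoot (X ^ 2 - 1 : ℝ[X]))).injective (htt.trans h3.symm)
    nlinarith [mul_self_nonneg t]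
end
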